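/- arXiv:1209.0938 — 2 statements merged into one kernel-verified Lean document; each statement's English description precedes it below -/
import Mathlib

section
/- Let T be a tower diagram and let c be a corner cell of T with flight number β. Then sliding β into the diagram c^↖T (T with the cell c removed) does not terminate and β^↘(c^↖T) = T. -/
abbrev Cell : Type := ℕ × ℕ

/-- A tower diagram: a finite set of cells `(i, j)` with `i ≥ 1` that is downward
closed in each column. -/
def IsTowerDiagram (T : Finset Cell) : Prop :=
  ∀ c ∈ T, 1 ≤ c.1 ∧ ∀ j' ≤ c.2, (c.1, j') ∈ T

/-- The flight path of a cell of `T` (F1: direct flight, F2: zigzag flight). -/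
inductive FlightPath (T : Finset Cell) : Cell → Finset Cell → Prop
  | direct (i j : ℕ) (hmem : (i, j) ∈ T)
      (hnone : ∀ c ∈ T, ¬(c.1 < i ∧ c.1 + c.2 + 1 = i + j)) :
      FlightPath T (i, j) {(i, j)}
  | zigzag (i j i' j' : ℕ) (P : Finset Cell)
      (hmem : (i, j) ∈ T) (hmem' : (i', j') ∈ T)
      (hleft : i' < i) (hdiag : i' + j' + 1 = i + j)
      (hclosest : ∀ c ∈ T, c.1 < i → c.1 + c.2 + 1 = i + j → c.1 ≤ i')
      (hup : (i', j' + 1) ∈ T)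
      (hrec : FlightPath T (i', j') P) :
      FlightPath T (i, j) (insert (i, j) (insert (i', j' + 1) P))

/-- `FlightNumber T c f`: `c` has a flight path in `T` whose lexicographically
least cell has coordinate sum `f`. -/
def FlightNumber (T : Finset Cell) (c : Cell) (f : ℕ) : Prop :=
  ∃ P : Finset Cell, FlightPath T c P ∧
    ∃ m ∈ P, m.1 + m.2 = f ∧ ∀ p ∈ P, m.1 < p.1 ∨ (m.1 = p.1 ∧ m.2 ≤ p.2)

/-- A corner cell: it has a flight path and no cell on top of it. -/
def IsCornerCell (T : Finset Cell) (c : Cell) : Prop :=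
  c ∈ T ∧ (c.1, c.2 + 1) ∉ T ∧ ∃ P, FlightPath T c P

/-- `SlideAux T lo α T'` : sliding `α` into the subdiagram of `T` consisting of
the towers in columns `≥ lo` does not terminate and produces `T'`. -/
inductive SlideAux (T : Finset Cell) : ℕ → ℕ → Finset Cell → Prop
  | s1a (lo α : ℕ)
      (h1 : ∀ c ∈ T, lo ≤ c.1 → c.1 + c.2 + 1 ≠ α)
      (h2 : ∀ c ∈ T, lo ≤ c.1 → c.1 + c.2 ≠ α) :
      SlideAux T lo α (insert (α, 0) T)
  | s1c (lo α : ℕ) (T' : Finset Cell)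
      (h1 : ∀ c ∈ T, lo ≤ c.1 → c.1 + c.2 + 1 ≠ α)
      (h2 : (α, 0) ∈ T) (h2' : lo ≤ α) (h3 : (α, 1) ∈ T)
      (hrec : SlideAux T (α + 1) (α + 1) T') :
      SlideAux T lo α T'
  | s2a (lo α i j : ℕ)
      (hmem : (i, j) ∈ T) (hlo : lo ≤ i) (hdiag : i + j + 1 = α)
      (hmin : ∀ c ∈ T, lo ≤ c.1 → c.1 + c.2 + 1 = α → i ≤ c.1)
      (htop : (i, j + 1) ∉ T) :
      SlideAux T lo α (insert (i, j + 1) T)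
  | s2c (lo α i j : ℕ) (T' : Finset Cell)
      (hmem : (i, j) ∈ T) (hlo : lo ≤ i) (hdiag : i + j + 1 = α)
      (hmin : ∀ c ∈ T, lo ≤ c.1 → c.1 + c.2 + 1 = α → i ≤ c.1)
      (h1 : (i, j + 1) ∈ T) (h2 : (i, j + 2) ∈ T)
      (hrec : SlideAux T (i + 1) (α + 1) T') :
      SlideAux T lo α T'

/-- The slide `α ↘ T` does not terminate and produces `T'`. -/
def Slides (T : Finset Cell) (α : ℕ) (T' : Finset Cell) : Prop :=
  SlideAux T 0 α T'

/-- Successive sliding of the letters of a word into the empty diagram. -/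
inductive SRDiagram : List ℕ → Finset Cell → Prop
  | nil : SRDiagram [] ∅
  | snoc {w : List ℕ} {T T' : Finset Cell} {a : ℕ}
      (hw : SRDiagram w T) (ha : Slides T a T') :
      SRDiagram (w ++ [a]) T'

/-- The shape (underlying diagram) of a labelled tableau. -/
def shapeOf (R : Finset (Cell × ℕ)) : Finset Cell := R.image Prod.fst

/-- The recording tableau of the SR algorithm: the cell created at step `k` is
labelled `k`. -/
inductive SRRecord : List ℕ → Finset (Cell × ℕ) → Prop
  | nil : SRRecord [] ∅
  | snoc {w : List ℕ} {R : Finset (Cell × ℕ)} {a : ℕ} {c : Cell}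
      (hw : SRRecord w R) (hc : c ∉ shapeOf R)
      (ha : Slides (shapeOf R) a (insert c (shapeOf R))) :
      SRRecord (w ++ [a]) (insert (c, w.length + 1) R)

/-- The sliding tableau of the SR algorithm: each new cell `(i, j)` is labelled
`i + j`. -/
inductive SRSliding : List ℕ → Finset (Cell × ℕ) → Prop
  | nil : SRSliding [] ∅
  | snoc {w : List ℕ} {S : Finset (Cell × ℕ)} {a : ℕ} {c : Cell}
      (hw : SRSliding w S) (hc : c ∉ shapeOf S)
      (ha : Slides (shapeOf S) a (insert c (shapeOf S))) :
      SRSliding (w ++ [a]) (insert (c, c.1 + c.2) S)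

/-- A tower tableau: a bijective labelling of a tower diagram by `{1, …, n}`. -/
def IsTowerTableau (R : Finset (Cell × ℕ)) : Prop :=
  IsTowerDiagram (shapeOf R) ∧
  (∀ p ∈ R, ∀ q ∈ R, p.1 = q.1 → p = q) ∧
  R.image Prod.snd = Finset.Icc 1 R.card

/-- The subtableau of cells with labels `≤ a`. -/
def labelLE (R : Finset (Cell × ℕ)) (a : ℕ) : Finset (Cell × ℕ) :=
  R.filter fun p => p.2 ≤ a

/-- A standard tower tableau. -/
def IsStandardTowerTableau (R : Finset (Cell × ℕ)) : Prop :=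
  IsTowerTableau R ∧
  ∀ p ∈ R, IsTowerDiagram (shapeOf (labelLE R p.2)) ∧
    IsCornerCell (shapeOf (labelLE R p.2)) p.1

/-- `ReadsTo R w` : `w` is the reading word of the tableau `R`: the `k`-th letter
is the flight number, in `shape (R_{≤ k})`, of the cell labelled `k`. -/
def ReadsTo (R : Finset (Cell × ℕ)) (w : List ℕ) : Prop :=
  w.length = R.card ∧
  ∀ k : Fin w.length, ∀ c : Cell, (c, (k : ℕ) + 1) ∈ R →
    FlightNumber (shapeOf (labelLE R ((k : ℕ) + 1))) c (w.get k)

/-- A word of positive integers. -/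
def IsPosWord (w : List ℕ) : Prop := ∀ a ∈ w, 1 ≤ a

/-- The permutation represented by a word: the product of the corresponding
adjacent transpositions `sᵢ = (i, i+1)`. -/
def permOf (w : List ℕ) : Equiv.Perm ℕ :=
  (w.map fun i => Equiv.swap i (i + 1)).prod

/-- A reduced word: of minimal length among the positive words representing the
same permutation. -/
def IsReducedWord (w : List ℕ) : Prop :=
  IsPosWord w ∧
    ∀ w' : List ℕ, IsPosWord w' → permOf w' = permOf w → w.length ≤ w'.length

/-- A finite permutation: an element of the direct limit `⋃ₙ Sₙ`. -/
def FinitePerm (ω : Equiv.Perm ℕ) : Prop := ∃ w, IsPosWord w ∧ permOf w = ω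

/-- The Coxeter length of a finite permutation. -/
noncomputable def coxLength (ω : Equiv.Perm ℕ) : ℕ :=
  sInf {n | ∃ w : List ℕ, IsPosWord w ∧ permOf w = ω ∧ w.length = n}

/-- The Rothe diagram of a permutation (pairs written `(row, column)`). -/
def RotheDiagram (ω : Equiv.Perm ℕ) : Set (ℕ × ℕ) :=
  {p | 1 ≤ p.1 ∧ 1 ≤ p.2 ∧ p.2 < ω p.1 ∧ p.1 < ω.symm p.2}

/-- Interchanging rows `i` and `i + 1` of a diagram. -/
def rowSwap (i : ℕ) (D : Set (ℕ × ℕ)) : Set (ℕ × ℕ) :=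
  {p | (Equiv.swap i (i + 1) p.1, p.2) ∈ D}

/-- The natural labelling of a tower diagram: labels `1, …, n` go bottom to top
within each tower, taking the towers from right to left. -/
def naturalTableau (T : Finset Cell) : Finset (Cell × ℕ) :=
  T.image fun c => (c, (T.filter fun d => c.1 < d.1).card + c.2 + 1)

/-- A word in natural form: a concatenation of blocks, each a strictly
increasing run of consecutive integers, whose initial terms strictly decrease. -/
def IsNaturalForm (η : List ℕ) : Prop :=
  ∃ blocks : List (List ℕ),
    η = blocks.flatten ∧
    (∀ b ∈ blocks, ∃ s len : ℕ, 1 ≤ len ∧ b = List.range' s len) ∧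
    List.Chain' (· > ·) (blocks.map fun b => b.headI)

/- Read the flight path of `c` backwards, from its lexicographically least cell `(i, j)`,
where `β = i + j`, up to `c`. Sliding `β` meets no cell left of column `i` on the diagonal
below (F1). At each cell `(i', j')` of the path other than `c`, the column also holds
`(i', j' + 1)`, so the slide `i' + j'` bumps past column `i'` as `i' + j' + 1`, and the
closest-cell condition (F2) makes the next cell of the path the leftmost one it meets. In the
column of `c` the cell `c` itself is missing, and the slide puts it back. -/

theorem FlightPath.mem {T P : Finset Cell} {c : Cell} (h : FlightPath T c P) : c ∈ T := by
  cases h <;> assumption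

theorem FlightPath.mem_path {T P : Finset Cell} {c : Cell} (h : FlightPath T c P) : c ∈ P := by
  cases h <;> simp

theorem SlideAux.skip_column {S T' : Finset Cell} {lo i j : ℕ}
    (hcol : ∀ k ≤ j + 1, (i, k) ∈ S) (hlo : lo ≤ i)
    (hleft : ∀ d ∈ S, lo ≤ d.1 → d.1 + d.2 + 1 = i + j → i ≤ d.1)
    (h : SlideAux S (i + 1) (i + j + 1) T') :
    SlideAux S lo (i + j) T' := by
  cases j with
  | zero =>
    refine .s1c lo (i + 0) T' (fun d hd hlod hdiag => ?_) (hcol 0 (by omega)) (by omega)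
      (hcol 1 le_rfl) h
    have := hleft d hd hlod hdiag
    omega
  | succ j =>
    exact .s2c lo (i + (j + 1)) i j T' (hcol j (by omega)) hlo (by omega) hleft
      (hcol (j + 1) (by omega)) (hcol (j + 2) le_rfl) h

theorem slideAux_erase_self {T : Finset Cell} (hT : IsTowerDiagram T) {lo i j : ℕ}
    (hmem : (i, j) ∈ T) (hlo : lo ≤ i)
    (hleft : ∀ d ∈ T, lo ≤ d.1 → d.1 + d.2 + 1 = i + j → i ≤ d.1) :
    SlideAux (T.erase (i, j)) lo (i + j) T := by
  suffices SlideAux (T.erase (i, j)) lo (i + j) (insert (i, j) (T.erase (i, j))) by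
    rwa [Finset.insert_erase hmem] at this
  cases j with
  | zero =>
    refine .s1a lo (i + 0) (fun d hd hlod hdiag => ?_) (fun d hd hlod hdiag => ?_)
    · have := hleft d (Finset.mem_of_mem_erase hd) hlod hdiag
      omega
    · obtain ⟨hne, hd⟩ := Finset.mem_erase.mp hd
      obtain ⟨d₁, _ | d₂⟩ := d
      · exact hne (by simpa using hdiag)
      · -- `d` is left of column `i` on diagonal `i`, so the cell below it contradicts `hleft`
        have := hleft (d₁, d₂) ((hT _ hd).2 d₂ (Nat.le_succ d₂)) hlod (by dsimp only at hdiag ⊢; omega)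
        dsimp only at this hdiag
        omega
  | succ j =>
    exact .s2a lo (i + (j + 1)) i j
      (Finset.mem_erase.mpr ⟨by simp, (hT _ hmem).2 j (by omega)⟩) hlo (by omega)
      (fun d hd => hleft d (Finset.mem_of_mem_erase hd)) (Finset.notMem_erase _ _)

theorem FlightPath.slideAux_erase {T P : Finset Cell} {c c₀ m : Cell}
    (hT : IsTowerDiagram T) (hP : FlightPath T c P) (hc : c.1 ≤ c₀.1)
    (hreach : ∀ lo ≤ c.1, (∀ d ∈ T, lo ≤ d.1 → d.1 + d.2 + 1 = c.1 + c.2 → c.1 ≤ d.1) →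
      SlideAux (T.erase c₀) lo (c.1 + c.2) T)
    (hm : m ∈ P) (hmin : ∀ p ∈ P, m.1 < p.1 ∨ (m.1 = p.1 ∧ m.2 ≤ p.2)) :
    SlideAux (T.erase c₀) 0 (m.1 + m.2) T := by
  induction hP with
  | direct i j _ hnone =>
    obtain rfl := Finset.mem_singleton.mp hm
    exact hreach 0 (Nat.zero_le _) fun d hd _ hdiag =>
      not_lt.mp fun hlt => hnone d hd ⟨hlt, hdiag⟩
  | zigzag i j i' j' P _ _ hlt hdiag hclosest hup hrec ih =>
    have hm' : m ∈ P := by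
      have hbelow := hmin (i', j') (by simp [hrec.mem_path])
      rcases Finset.mem_insert.mp hm with rfl | hm
      · simp only at hbelow; omega
      rcases Finset.mem_insert.mp hm with rfl | hm
      · simp only at hbelow; omega
      exact hm
    refine ih (by simp only at hc ⊢; omega) (fun lo hlo hleft => ?_) hm'
      fun p hp => hmin p (by simp [hp])
    have hcol : ∀ k ≤ j' + 1, (i', k) ∈ T.erase c₀ := fun k hk =>
      Finset.mem_erase.mpr ⟨fun h => by simp only [← h] at hc; omega, (hT _ hup).2 k hk⟩
    refine SlideAux.skip_column hcol hlo (fun d hd => hleft d (Finset.mem_of_mem_erase hd)) ?_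
    rw [hdiag]
    exact hreach (i' + 1) hlt fun d hd hlo' hd' =>
      not_lt.mp fun hlt' => by have := hclosest d hd hlt' hd'; omega

theorem slide_flightNumber_into_erase_corner_general
    (T : Finset Cell) (hT : IsTowerDiagram T)
    (c : Cell)
    (β : ℕ) (hβ : FlightNumber T c β) :
    Slides (T.erase c) β T := by
  obtain ⟨P, hP, m, hm, rfl, hmin⟩ := hβ
  exact hP.slideAux_erase hT le_rfl
    (fun _ hlo hleft => slideAux_erase_self hT hP.mem hlo hleft) hm hmin

/-- If `c` is a corner cell of the tower diagram `T` with
flight number `β`, then sliding `β` into `T` with `c` removed does not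
terminate and recovers `T`. -/
theorem slide_flightNumber_into_erase_corner
    (T : Finset Cell) (hT : IsTowerDiagram T)
    (c : Cell) (hc : IsCornerCell T c)
    (β : ℕ) (hβ : FlightNumber T c β) :
    Slides (T.erase c) β T :=
  slide_flightNumber_into_erase_corner_general T hT c β hβ
end

section
/- The maps α ↦ R(α) and R ↦ Read(R) are mutually inverse bijections between the set SRW(ℤ⁺) of words on which the sliding and recording algorithm does not terminate and the set STT of all standard tower tableaux of all shapes. -/
/-!
Sliding `α` into `T` visits cells `m₀, m₁, …, mₖ`, with `mₜ` on the diagonal `x + y = α + t` and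
covered by a cell of `T` for `t < k`, and adds the last one, `c = mₖ`. Read from `c` downwards this
is a flight path: `mₜ` is the closest cell to the left of `mₜ₊₁` on the diagonal below it, and
nothing lies to the left of `m₀` on the diagonal below `m₀`, which is (F1). So `c` is a corner cell
with flight number `α`. Conversely, the flight path of a corner cell `c`, walked upwards from its
lowest cell, is the route of the slide of `flight#(c)` into the diagram without `c`. Both maps are
then built one letter at a time, adding or removing the cell with the largest label.
-/

theorem FlightPath.mem_self {T : Finset Cell} {c : Cell} {P : Finset Cell}
    (h : FlightPath T c P) : c ∈ P := by
  cases h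
  · exact Finset.mem_singleton_self _
  · exact Finset.mem_insert_self _ _

theorem IsTowerDiagram.insert {T : Finset Cell} (hT : IsTowerDiagram T) {i j : ℕ} (hi : 1 ≤ i)
    (hbelow : ∀ j' < j, (i, j') ∈ T) : IsTowerDiagram (insert (i, j) T) := by
  intro d hd
  rcases Finset.mem_insert.1 hd with rfl | hd
  · refine ⟨hi, fun j' hj' => ?_⟩
    rcases hj'.lt_or_eq with hlt | rfl
    · exact Finset.mem_insert_of_mem (hbelow j' hlt)
    · exact Finset.mem_insert_self _ _
  · exact ⟨(hT d hd).1, fun j' hj' => Finset.mem_insert_of_mem ((hT d hd).2 j' hj')⟩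

theorem IsTowerDiagram.erase {T : Finset Cell} (hT : IsTowerDiagram T) {c : Cell}
    (hc : (c.1, c.2 + 1) ∉ T) : IsTowerDiagram (T.erase c) := by
  intro d hd
  obtain ⟨hdc, hdT⟩ := Finset.mem_erase.1 hd
  refine ⟨(hT d hdT).1, fun j' hj' => Finset.mem_erase.2 ⟨fun hc' => ?_, (hT d hdT).2 j' hj'⟩⟩
  subst hc'
  have hlt : j' < d.2 := lt_of_le_of_ne hj' fun h => hdc (Prod.ext rfl h.symm)
  exact hc ((hT d hdT).2 _ hlt)

/-- Condition (F1) at `m`, restricted to the columns `x ≥ lo`. -/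
def LeftDiagonalFree (T : Finset Cell) (lo : ℕ) (m : Cell) : Prop :=
  ∀ d ∈ T, lo ≤ d.1 → d.1 < m.1 → d.1 + d.2 + 1 ≠ m.1 + m.2

/-- The part of a flight path of `c` from `c` down to `m`, built from the bottom and with no
condition (F1) at `m`. -/
inductive PartialFlight (T : Finset Cell) (c : Cell) : Cell → Finset Cell → Prop
  | refl (hc : c ∈ T) : PartialFlight T c c {c}
  | step {m : Cell} {P : Finset Cell} (i j : ℕ) (hrec : PartialFlight T c m P)
      (hmem : (i, j) ∈ T) (hleft : i < m.1) (hdiag : i + j + 1 = m.1 + m.2)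
      (hclosest : ∀ d ∈ T, d.1 < m.1 → d.1 + d.2 + 1 = m.1 + m.2 → d.1 ≤ i)
      (hup : (i, j + 1) ∈ T) :
      PartialFlight T c (i, j) (insert (i, j) (insert (i, j + 1) P))

namespace PartialFlight

variable {T : Finset Cell} {c m : Cell} {P : Finset Cell}

theorem base_mem (h : PartialFlight T c m P) : m ∈ P ∧ m ∈ T := by
  cases h with
  | refl hc => exact ⟨Finset.mem_singleton_self c, hc⟩
  | step i j _ hmem => exact ⟨Finset.mem_insert_self _ _, hmem⟩

theorem top_mem (h : PartialFlight T c m P) : c ∈ P := by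
  induction h with
  | refl => exact Finset.mem_singleton_self c
  | step _ _ _ _ _ _ _ _ ih => exact Finset.mem_insert_of_mem (Finset.mem_insert_of_mem ih)

theorem base_lex_le (h : PartialFlight T c m P) :
    ∀ p ∈ P, m.1 < p.1 ∨ (m.1 = p.1 ∧ m.2 ≤ p.2) := by
  induction h with
  | refl => simp
  | step i j _ _ hleft _ _ _ ih =>
    simp only [Finset.mem_insert, forall_eq_or_imp]
    refine ⟨by simp, by simp, fun p hp => ?_⟩
    rcases ih p hp with hlt | ⟨heq, _⟩ <;> omega

theorem base_fst_le (h : PartialFlight T c m P) : m.1 ≤ c.1 := by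
  rcases h.base_lex_le c h.top_mem with hlt | ⟨heq, _⟩ <;> omega

theorem flightNumber (h : PartialFlight T c m P) (hP : FlightPath T c P) :
    FlightNumber T c (m.1 + m.2) :=
  ⟨P, hP, m, h.base_mem.1, rfl, h.base_lex_le⟩

theorem flightPath_union {Q : Finset Cell} (h : PartialFlight T c m P) (hQ : FlightPath T m Q) :
    FlightPath T c (P ∪ Q) := by
  induction h generalizing Q with
  | refl =>
    rwa [Finset.union_eq_right.2 (Finset.singleton_subset_iff.2 hQ.mem_self)]
  | @step m P i j hrec hmem hleft hdiag hclosest hup ih =>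
    have hm := ih (FlightPath.zigzag m.1 m.2 i j Q hrec.base_mem.2 hmem hleft hdiag hclosest hup hQ)
    convert hm using 1
    have hmP := hrec.base_mem.1
    have hijQ := hQ.mem_self
    ext p
    simp only [Finset.mem_union, Finset.mem_insert]
    constructor
    · rintro ((rfl | rfl | hp) | hp) <;> simp_all
    · rintro (hp | rfl | rfl | hp) <;> simp_all

theorem flightPath (h : PartialFlight T c m P) (hm : LeftDiagonalFree T 0 m) :
    FlightPath T c P := by
  have hdirect : FlightPath T m {m} :=
    FlightPath.direct m.1 m.2 h.base_mem.2 fun d hd ⟨hlt, hdiag⟩ => hm d hd (Nat.zero_le _) hlt hdiag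
  simpa [Finset.union_eq_left.2 (Finset.singleton_subset_iff.2 h.base_mem.1)]
    using h.flightPath_union hdirect

theorem cons (h : PartialFlight T c m P) (i j : ℕ) (hmem : (i, j) ∈ T) (hleft : c.1 < i)
    (hdiag : c.1 + c.2 + 1 = i + j)
    (hclosest : ∀ d ∈ T, d.1 < i → d.1 + d.2 + 1 = i + j → d.1 ≤ c.1)
    (hup : (c.1, c.2 + 1) ∈ T) :
    PartialFlight T (i, j) m (insert (i, j) (insert (c.1, c.2 + 1) P)) := by
  induction h with
  | refl hc =>
    have := PartialFlight.step c.1 c.2 (PartialFlight.refl hmem) hc hleft hdiag hclosest hup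
    convert this using 1
    ext p
    simp only [Finset.mem_insert, Finset.mem_singleton]
    tauto
  | step i' j' _ hmem' hleft' hdiag' hclosest' hup' ih =>
    convert PartialFlight.step i' j' ih hmem' hleft' hdiag' hclosest' hup' using 1
    ext p
    simp only [Finset.mem_insert]
    tauto

end PartialFlight

theorem FlightPath.exists_partialFlight {T : Finset Cell} {c : Cell} {P : Finset Cell}
    (h : FlightPath T c P) : ∃ m, PartialFlight T c m P ∧ LeftDiagonalFree T 0 m := by
  induction h with
  | direct i j hmem hnone =>
    exact ⟨(i, j), PartialFlight.refl hmem, fun d hd _ hlt hdiag => hnone d hd ⟨hlt, hdiag⟩⟩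
  | zigzag i j i' j' P hmem _ hleft hdiag hclosest hup _ ih =>
    obtain ⟨m, hm, hfree⟩ := ih
    exact ⟨m, hm.cons i j hmem hleft hdiag hclosest hup, hfree⟩

theorem SlideAux.exists_insert {T T' : Finset Cell} {lo α : ℕ} (h : SlideAux T lo α T')
    (hT : IsTowerDiagram T) (hα : 1 ≤ α) (hlo : lo ≤ α) :
    ∃ c ∉ T, T' = insert c T ∧ IsTowerDiagram T' ∧ (c.1, c.2 + 1) ∉ T' := by
  induction h with
  | s1a lo α _ h2 =>
    have hα0 : (α, 0) ∉ T := fun hm => h2 _ hm hlo rfl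
    refine ⟨(α, 0), hα0, rfl, hT.insert hα (by simp), ?_⟩
    simp only [Finset.mem_insert, Prod.ext_iff, not_or]
    exact ⟨by simp, fun h1 => hα0 ((hT _ h1).2 0 (Nat.zero_le _))⟩
  | s1c _ _ _ _ _ _ _ _ ih => exact ih (by omega) le_rfl
  | s2a lo α i j hmem _ _ _ htop =>
    refine ⟨(i, j + 1), htop, rfl, hT.insert (hT _ hmem).1 fun j' hj' => (hT _ hmem).2 j' (by omega),
      ?_⟩
    simp only [Finset.mem_insert, Prod.ext_iff, not_or]
    exact ⟨by simp, fun h2 => htop ((hT _ h2).2 (j + 1) (by simp))⟩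
  | s2c _ _ _ _ _ _ _ hdiag _ _ _ _ ih => exact ih (by omega) (by omega)

theorem SlideAux.exists_partialFlight {T T' : Finset Cell} {lo α : ℕ} (h : SlideAux T lo α T')
    (hlo : lo ≤ α) :
    ∃ c m P, T' = insert c T ∧ PartialFlight T' c m P ∧ m.1 + m.2 = α ∧ lo ≤ m.1 ∧
      LeftDiagonalFree T' lo m := by
  induction h with
  | s1a lo α h1 _ =>
    refine ⟨(α, 0), (α, 0), _, rfl, .refl (Finset.mem_insert_self _ _), rfl, hlo, ?_⟩
    intro d hd hlod hlt
    rcases Finset.mem_insert.1 hd with rfl | hd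
    · exact absurd hlt (lt_irrefl _)
    · exact h1 d hd hlod
  | s2a lo α i j _ hloi hdiag hmin _ =>
    refine ⟨(i, j + 1), (i, j + 1), _, rfl, .refl (Finset.mem_insert_self _ _), by simp only; omega,
      hloi, ?_⟩
    intro d hd hlod hlt
    rcases Finset.mem_insert.1 hd with rfl | hd
    · exact absurd hlt (lt_irrefl _)
    · intro hdiag'
      have := hmin d hd hlod (by simp only at hdiag'; omega)
      simp only at hlt
      omega
  | s1c lo α T' h1 h2 h2' h3 _ ih =>
    obtain ⟨c, m, P, rfl, hP, hsum, hlom, hfree⟩ := ih le_rfl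
    refine ⟨c, (α, 0), _, rfl, hP.step α 0 (Finset.mem_insert_of_mem h2) (by omega) (by omega)
      (fun d hd hlt hdiag => ?_) (Finset.mem_insert_of_mem h3), by simp, h2', ?_⟩
    · by_contra! hgt
      exact hfree d hd hgt hlt hdiag
    · intro d hd hlod hlt hdiag
      rcases Finset.mem_insert.1 hd with rfl | hd
      · have := hP.base_fst_le
        simp at hlt
        omega
      · exact h1 d hd hlod (by simpa using hdiag)
  | s2c lo α i j T' hmem hloi hdiag hmin h1 h2 _ ih =>
    obtain ⟨c, m, P, rfl, hP, hsum, hlom, hfree⟩ := ih (by omega)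
    refine ⟨c, (i, j + 1), _, rfl, hP.step i (j + 1) (Finset.mem_insert_of_mem h1) (by omega)
      (by omega) (fun d hd hlt hdiag => ?_) (Finset.mem_insert_of_mem h2), by simp; omega, hloi, ?_⟩
    · by_contra! hgt
      exact hfree d hd hgt hlt hdiag
    · intro d hd hlod hlt hdiag
      simp only at hlt hdiag
      rcases Finset.mem_insert.1 hd with rfl | hd
      · have := hP.base_fst_le
        omega
      · have := hmin d hd hlod (by omega)
        omega

theorem Slides.exists_isCornerCell {T T' : Finset Cell} {α : ℕ} (h : Slides T α T')
    (hT : IsTowerDiagram T) (hα : 1 ≤ α) :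
    ∃ c ∉ T, T' = insert c T ∧ IsTowerDiagram T' ∧ IsCornerCell T' c ∧ FlightNumber T' c α := by
  obtain ⟨c, hcT, rfl, hT', htop⟩ := SlideAux.exists_insert h hT hα (Nat.zero_le _)
  obtain ⟨c', m, P, hcc', hP, rfl, -, hfree⟩ := SlideAux.exists_partialFlight h (Nat.zero_le _)
  obtain rfl : c = c' := (Finset.insert_inj hcT).1 hcc'
  have hFP := hP.flightPath hfree
  exact ⟨c, hcT, rfl, hT', ⟨Finset.mem_insert_self _ _, htop, P, hFP⟩, hP.flightNumber hFP⟩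

theorem PartialFlight.slideAux_erase {T : Finset Cell} {c m : Cell} {P : Finset Cell}
    (h : PartialFlight T c m P) (hT : IsTowerDiagram T) (hc : (c.1, c.2 + 1) ∉ T) {lo : ℕ}
    (hlo : lo ≤ m.1) (hfree : LeftDiagonalFree T lo m) :
    SlideAux (T.erase c) lo (m.1 + m.2) T := by
  induction h generalizing lo with
  | refl hcT =>
    obtain ⟨i, j⟩ := c
    rcases j with _ | j
    · have hs := SlideAux.s1a (T := T.erase (i, 0)) lo (i + 0)
        (fun d hd hlod hdiag => by
          have := hfree d (Finset.mem_of_mem_erase hd) hlod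
          simp only at this hdiag
          omega)
        (fun d hd hlod hdiag => by
          obtain ⟨hdc, hdT⟩ := Finset.mem_erase.1 hd
          rcases Nat.lt_or_ge d.1 i with hlt | hge
          · exact hfree (d.1, d.2 - 1) ((hT d hdT).2 _ (Nat.sub_le _ _)) hlod hlt (by simp only; omega)
          · exact hdc (Prod.ext (by simp only; omega) (by simp only; omega)))
      rwa [Nat.add_zero, Finset.insert_erase hcT] at hs
    · have hs := SlideAux.s2a (T := T.erase (i, j + 1)) lo (i + (j + 1)) i j
        (Finset.mem_erase.2 ⟨by simp, (hT _ hcT).2 j (by simp)⟩) hlo (by omega)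
        (fun d hd hlod hdiag => by
          by_contra! hlt
          exact hfree d (Finset.mem_of_mem_erase hd) hlod hlt (by simp only; omega))
        (Finset.notMem_erase _ _)
      rwa [Finset.insert_erase hcT] at hs
  | @step m P i j hrec hmem hleft hdiag hclosest hup ih =>
    have hrec' := ih (lo := i + 1) hleft fun d hd hlod hlt hdiag' => by
      have := hclosest d hd hlt hdiag'
      omega
    have hic : i < c.1 := lt_of_lt_of_le hleft hrec.base_fst_le
    have hne : ∀ y, (i, y) ∈ T → (i, y) ∈ T.erase c := fun y hy =>
      Finset.mem_erase.2 ⟨fun h => by simp [← h] at hic, hy⟩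
    rcases j with _ | j
    · refine SlideAux.s1c lo (i + 0) T (fun d hd hlod hdiag' => ?_) (hne 0 hmem) hlo (hne 1 hup)
        (by rwa [← hdiag] at hrec')
      have := hfree d (Finset.mem_of_mem_erase hd) hlod
      simp only at this hdiag'
      omega
    · refine SlideAux.s2c lo (i + (j + 1)) i j T (hne j ((hT _ hmem).2 j (by simp))) hlo (by omega)
        (fun d hd hlod hdiag' => ?_) (hne _ hmem) (hne _ hup) (by rwa [← hdiag] at hrec')
      by_contra! hlt
      exact hfree d (Finset.mem_of_mem_erase hd) hlod hlt (by simp only; omega)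

theorem IsCornerCell.exists_slides {T : Finset Cell} {c : Cell} (hc : IsCornerCell (insert c T) c)
    (hT : IsTowerDiagram (insert c T)) (hcT : c ∉ T) :
    ∃ α, 1 ≤ α ∧ FlightNumber (insert c T) c α ∧ Slides T α (insert c T) := by
  obtain ⟨-, htop, P, hFP⟩ := hc
  obtain ⟨m, hP, hfree⟩ := hFP.exists_partialFlight
  refine ⟨m.1 + m.2, ?_, hP.flightNumber hFP, ?_⟩
  · have := (hT m hP.base_mem.2).1
    omega
  · have hslide := hP.slideAux_erase hT htop (Nat.zero_le _) hfree
    rwa [Finset.erase_insert hcT] at hslide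

theorem mem_shapeOf {c : Cell} {R : Finset (Cell × ℕ)} : c ∈ shapeOf R ↔ ∃ k, (c, k) ∈ R := by
  simp [shapeOf]

theorem shapeOf_insert (c : Cell) (k : ℕ) (R : Finset (Cell × ℕ)) :
    shapeOf (insert (c, k) R) = insert c (shapeOf R) :=
  Finset.image_insert _ _ _

theorem notMem_of_notMem_shapeOf {c : Cell} {R : Finset (Cell × ℕ)} (hc : c ∉ shapeOf R) (k : ℕ) :
    (c, k) ∉ R :=
  fun h => hc (mem_shapeOf.2 ⟨k, h⟩)

theorem labelLE_insert_of_lt {R : Finset (Cell × ℕ)} {c : Cell} {k l : ℕ} (h : k < l) :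
    labelLE (insert (c, l) R) k = labelLE R k := by
  simp [labelLE, Finset.filter_insert, Nat.not_le.2 h]

theorem labelLE_eq_self {R : Finset (Cell × ℕ)} {k : ℕ} (h : ∀ p ∈ R, p.2 ≤ k) :
    labelLE R k = R :=
  Finset.filter_eq_self.2 h

namespace IsTowerTableau

variable {R : Finset (Cell × ℕ)}

theorem snd_le_card (hR : IsTowerTableau R) {p : Cell × ℕ} (hp : p ∈ R) : p.2 ≤ R.card :=
  (Finset.mem_Icc.1 (hR.2.2 ▸ Finset.mem_image_of_mem _ hp)).2

theorem labelLE_card (hR : IsTowerTableau R) : labelLE R R.card = R :=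
  labelLE_eq_self fun _ => hR.snd_le_card

theorem injOn_snd (hR : IsTowerTableau R) : Set.InjOn Prod.snd (R : Set (Cell × ℕ)) :=
  Finset.card_image_iff.1 (by rw [hR.2.2, Nat.card_Icc, Nat.add_sub_cancel])

theorem exists_eq_insert (hR : IsTowerTableau R) (hne : R.Nonempty) :
    ∃ c R₀, c ∉ shapeOf R₀ ∧ R = insert (c, R₀.card + 1) R₀ := by
  have hn : R.card ∈ R.image Prod.snd := by
    rw [hR.2.2]
    exact Finset.mem_Icc.2 ⟨hne.card_pos, le_rfl⟩
  obtain ⟨⟨c, n⟩, hcR, rfl⟩ := Finset.mem_image.1 hn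
  refine ⟨c, R.erase (c, R.card), fun hc => ?_, ?_⟩
  · obtain ⟨k, hk⟩ := mem_shapeOf.1 hc
    exact Finset.ne_of_mem_erase hk (hR.2.1 _ (Finset.mem_of_mem_erase hk) _ hcR rfl)
  · rw [Finset.card_erase_of_mem hcR, Nat.sub_add_cancel hne.card_pos, Finset.insert_erase hcR]

theorem insert_last {c : Cell} (hR : IsTowerTableau R) (hc : c ∉ shapeOf R)
    (hT : IsTowerDiagram (insert c (shapeOf R))) : IsTowerTableau (insert (c, R.card + 1) R) := by
  have hcR := notMem_of_notMem_shapeOf hc (R.card + 1)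
  refine ⟨shapeOf_insert c _ R ▸ hT, ?_, ?_⟩
  · have hfst : ∀ q ∈ R, c ≠ q.1 := fun q hq hcq => hc (mem_shapeOf.2 ⟨q.2, hcq ▸ hq⟩)
    intro p hp q hq hpq
    rcases Finset.mem_insert.1 hp with rfl | hp <;> rcases Finset.mem_insert.1 hq with rfl | hq
    · rfl
    · exact absurd hpq (hfst q hq)
    · exact absurd hpq.symm (hfst p hp)
    · exact hR.2.1 p hp q hq hpq
  · rw [Finset.image_insert, Finset.card_insert_of_notMem hcR, hR.2.2]
    exact Finset.insert_Icc_right_eq_Icc_add_one (by omega)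

theorem of_insert_last {c : Cell} (hR : IsTowerTableau (insert (c, R.card + 1) R))
    (hc : c ∉ shapeOf R) (htop : (c.1, c.2 + 1) ∉ insert c (shapeOf R)) : IsTowerTableau R := by
  have hcR := notMem_of_notMem_shapeOf hc (R.card + 1)
  have hlabel : R.card + 1 ∉ R.image Prod.snd := by
    intro h
    obtain ⟨p, hp, hpl⟩ := Finset.mem_image.1 h
    exact hcR (hR.injOn_snd (Finset.mem_insert_of_mem hp) (Finset.mem_insert_self _ _) hpl ▸ hp)
  refine ⟨?_, fun p hp q hq => hR.2.1 p (Finset.mem_insert_of_mem hp) q (Finset.mem_insert_of_mem hq),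
    ?_⟩
  · have hT := hR.1.erase (c := c) (shapeOf_insert c _ R ▸ htop)
    rwa [shapeOf_insert, Finset.erase_insert hc] at hT
  · have hlabels := hR.2.2
    rw [Finset.image_insert, Finset.card_insert_of_notMem hcR] at hlabels
    ext k
    have hk := congrArg (k ∈ ·) hlabels
    simp only [Finset.mem_insert, Finset.mem_Icc, eq_iff_iff] at hk
    rw [Finset.mem_Icc]
    by_cases hkn : k = R.card + 1
    · subst hkn
      simp only [hlabel, false_iff]
      omega
    · simp only [hkn, false_or] at hk
      rw [hk]
      omega

end IsTowerTableau

namespace IsStandardTowerTableau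

variable {R : Finset (Cell × ℕ)} {c : Cell}

theorem insert_last (hR : IsStandardTowerTableau R) (hc : c ∉ shapeOf R)
    (hT : IsTowerDiagram (insert c (shapeOf R))) (hcorner : IsCornerCell (insert c (shapeOf R)) c) :
    IsStandardTowerTableau (insert (c, R.card + 1) R) := by
  have hR' := hR.1.insert_last hc hT
  have hcard : (insert (c, R.card + 1) R).card = R.card + 1 :=
    Finset.card_insert_of_notMem (notMem_of_notMem_shapeOf hc _)
  have hall := hR'.labelLE_card
  rw [hcard] at hall
  refine ⟨hR', fun p hp => ?_⟩
  rcases Finset.mem_insert.1 hp with rfl | hp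
  · dsimp only
    rw [hall, shapeOf_insert]
    exact ⟨hT, hcorner⟩
  · rw [labelLE_insert_of_lt (Nat.lt_succ_of_le (hR.1.snd_le_card hp))]
    exact hR.2 p hp

theorem of_insert_last (h : IsStandardTowerTableau (insert (c, R.card + 1) R))
    (hc : c ∉ shapeOf R) :
    IsStandardTowerTableau R ∧ IsTowerDiagram (insert c (shapeOf R)) ∧
      IsCornerCell (insert c (shapeOf R)) c := by
  have hcard : (insert (c, R.card + 1) R).card = R.card + 1 :=
    Finset.card_insert_of_notMem (notMem_of_notMem_shapeOf hc _)
  have hall := h.1.labelLE_card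
  rw [hcard] at hall
  have hlast := h.2 _ (Finset.mem_insert_self _ _)
  dsimp only at hlast
  rw [hall, shapeOf_insert] at hlast
  have hR := h.1.of_insert_last hc hlast.2.2.1
  refine ⟨⟨hR, fun p hp => ?_⟩, hlast⟩
  have hp' := h.2 p (Finset.mem_insert_of_mem hp)
  rwa [labelLE_insert_of_lt (Nat.lt_succ_of_le (hR.snd_le_card hp))] at hp'

end IsStandardTowerTableau

theorem ReadsTo.insert_last {R : Finset (Cell × ℕ)} {w : List ℕ} {c : Cell} {a : ℕ}
    (hw : ReadsTo R w) (hR : IsTowerTableau R) (hc : c ∉ shapeOf R)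
    (ha : FlightNumber (insert c (shapeOf R)) c a) :
    ReadsTo (insert (c, w.length + 1) R) (w ++ [a]) := by
  have hcR := notMem_of_notMem_shapeOf hc (w.length + 1)
  have hlabel : ∀ p ∈ R, p.2 ≤ w.length := fun p hp => hw.1 ▸ hR.snd_le_card hp
  refine ⟨by rw [Finset.card_insert_of_notMem hcR, List.length_append, hw.1, List.length_singleton],
    fun k c' hc' => ?_⟩
  have hk : (k : ℕ) ≤ w.length := Nat.lt_succ_iff.1 (by simpa using k.2)
  rcases hk.lt_or_eq with hlt | heq
  · have hc'R : (c', (k : ℕ) + 1) ∈ R := by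
      refine (Finset.mem_insert.1 hc').resolve_left fun h => ?_
      have := (Prod.ext_iff.1 h).2
      simp only at this
      omega
    rw [labelLE_insert_of_lt (by omega), List.get_eq_getElem, List.getElem_append_left hlt]
    exact hw.2 ⟨k, hlt⟩ c' hc'R
  · have hc'c : c' = c := by
      rcases Finset.mem_insert.1 hc' with h | h
      · exact (Prod.ext_iff.1 h).1
      · have := hlabel _ h
        simp only at this
        omega
    have hall : labelLE (insert (c, w.length + 1) R) ((k : ℕ) + 1) = insert (c, w.length + 1) R :=
      labelLE_eq_self fun p hp => by
        rcases Finset.mem_insert.1 hp with rfl | hp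
        · exact heq ▸ le_rfl
        · exact heq ▸ Nat.le_succ_of_le (hlabel p hp)
    rw [hall, shapeOf_insert, hc'c, List.get_eq_getElem, List.getElem_concat_length heq]
    exact ha

theorem isStandardTowerTableau_empty : IsStandardTowerTableau (∅ : Finset (Cell × ℕ)) :=
  ⟨⟨by simp [shapeOf, IsTowerDiagram], by simp, by simp⟩, by simp⟩

theorem readsTo_empty : ReadsTo ∅ [] :=
  ⟨rfl, fun k => k.elim0⟩

theorem SRDiagram.exists_srRecord {w : List ℕ} {T : Finset Cell} (h : SRDiagram w T)
    (hw : IsPosWord w) :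
    ∃ R, shapeOf R = T ∧ SRRecord w R ∧ IsStandardTowerTableau R ∧ ReadsTo R w := by
  induction h with
  | nil => exact ⟨∅, rfl, .nil, isStandardTowerTableau_empty, readsTo_empty⟩
  | @snoc w T T' a _ hslide ih =>
    obtain ⟨hw, ha⟩ := List.forall_mem_append.1 hw
    obtain ⟨R, rfl, hrec, hstd, hread⟩ := ih hw
    obtain ⟨c, hc, rfl, hT, hcorner, hflight⟩ := hslide.exists_isCornerCell hstd.1.1 (ha a (by simp))
    refine ⟨insert (c, w.length + 1) R, shapeOf_insert _ _ _, .snoc hrec hc hslide, ?_,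
      hread.insert_last hstd.1 hc hflight⟩
    rw [hread.1]
    exact hstd.insert_last hc hT hcorner

theorem IsStandardTowerTableau.exists_readsTo_srRecord {R : Finset (Cell × ℕ)}
    (hR : IsStandardTowerTableau R) : ∃ w, IsPosWord w ∧ ReadsTo R w ∧ SRRecord w R := by
  induction R using Finset.strongInduction with
  | H R ih =>
    obtain rfl | hne := R.eq_empty_or_nonempty
    · exact ⟨[], by simp [IsPosWord], readsTo_empty, .nil⟩
    obtain ⟨c, R, hc, rfl⟩ := hR.1.exists_eq_insert hne
    obtain ⟨hR, hT, hcorner⟩ := hR.of_insert_last hc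
    obtain ⟨w, hw, hread, hrec⟩ := ih R (Finset.ssubset_insert (notMem_of_notMem_shapeOf hc _)) hR
    obtain ⟨α, hα, hflight, hslide⟩ := hcorner.exists_slides hT hc
    rw [← hread.1]
    refine ⟨w ++ [α], List.forall_mem_append.2 ⟨hw, by simpa⟩,
      hread.insert_last hR.1 hc hflight, .snoc hrec hc hslide⟩

/-- The maps `α ↦ R(α)` and `R ↦ Read(R)` are mutually inverse
bijections between `SRW(ℤ⁺)` and the set of all standard tower tableaux. -/
theorem srw_stt_bijection :
    (∀ w : List ℕ, IsPosWord w → (∃ T, SRDiagram w T) →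
        ∃ R : Finset (Cell × ℕ),
          SRRecord w R ∧ IsStandardTowerTableau R ∧ ReadsTo R w) ∧
      (∀ R : Finset (Cell × ℕ), IsStandardTowerTableau R →
        ∃ w : List ℕ, IsPosWord w ∧ ReadsTo R w ∧ SRRecord w R) :=
  ⟨fun _ hw ⟨_, hT⟩ => (hT.exists_srRecord hw).imp fun _ h => h.2,
    fun _ hR => hR.exists_readsTo_srRecord⟩
end
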